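/- arXiv:1904.09761 — 3 statements merged into one kernel-verified Lean document; each statement's English description precedes it below -/
import Mathlib

section
/- Let ϑ: (G,P) → (G',P') be a controlled map between quasi-lattice ordered groups. If p, q ∈ P have a common upper bound in P (p ∨ q < ∞) and ϑ(p) ≤ ϑ(q), then p ≤ q. -/
/-- A quasi-lattice ordered group structure on a group `G`: a positive cone `P`
(submonoid with `P ∩ P⁻¹ = {1}`) such that any two elements of `P` with a common
upper bound (for the left-invariant order `g ≤ h ↔ g⁻¹ * h ∈ P`) have a least
common upper bound in `P`. -/
structure QuasiLattice (G : Type*) [Group G] where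
  P : Set G
  one_mem : (1 : G) ∈ P
  mul_mem : ∀ {a b : G}, a ∈ P → b ∈ P → a * b ∈ P
  antisymm' : ∀ g ∈ P, g⁻¹ ∈ P → g = 1
  lub_exists : ∀ p ∈ P, ∀ q ∈ P,
    (∃ r ∈ P, p⁻¹ * r ∈ P ∧ q⁻¹ * r ∈ P) →
    ∃ r ∈ P, p⁻¹ * r ∈ P ∧ q⁻¹ * r ∈ P ∧
      ∀ s ∈ P, p⁻¹ * s ∈ P → q⁻¹ * s ∈ P → r⁻¹ * s ∈ P

namespace QuasiLattice

variable {G G' : Type*} [Group G] [Group G']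

/-- The left-invariant partial order induced by the positive cone. -/
def le (Q : QuasiLattice G) (g h : G) : Prop := g⁻¹ * h ∈ Q.P

/-- `p` and `q` have a common upper bound in `P` (i.e. `p ∨ q < ∞`). -/
def HasCUB (Q : QuasiLattice G) (p q : G) : Prop := ∃ r ∈ Q.P, Q.le p r ∧ Q.le q r

/-- `r` is the least common upper bound of `p` and `q` in `P`. -/
def IsLub (Q : QuasiLattice G) (p q r : G) : Prop :=
  r ∈ Q.P ∧ Q.le p r ∧ Q.le q r ∧ ∀ s ∈ Q.P, Q.le p s → Q.le q s → Q.le r s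

end QuasiLattice

/-- A controlled map between quasi-lattice ordered groups: an order-preserving group
homomorphism, finite-to-one on `P`, respecting least upper bounds. -/
structure ControlledMap {G G' : Type*} [Group G] [Group G']
    (Q : QuasiLattice G) (Q' : QuasiLattice G') where
  toFun : G →* G'
  mapsP : ∀ p ∈ Q.P, toFun p ∈ Q'.P
  finite_fibers : ∀ g' : G', {p | p ∈ Q.P ∧ toFun p = g'}.Finite
  map_lub : ∀ p ∈ Q.P, ∀ q ∈ Q.P, ∀ r, Q.IsLub p q r →
    Q'.IsLub (toFun p) (toFun q) (toFun r)

namespace ControlledMap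

variable {G G' : Type*} [Group G] [Group G'] {Q : QuasiLattice G} {Q' : QuasiLattice G'}

/-- `p` is a minimal element of `ϑ⁻¹([m,∞]) ∩ P`. -/
def Minimal (θ : ControlledMap Q Q') (m : G') (p : G) : Prop :=
  p ∈ Q.P ∧ Q'.le m (θ.toFun p) ∧
    ∀ r ∈ Q.P, Q'.le m (θ.toFun r) → Q.le r p → r = p

/-- The minimality property of a controlled map: distinct minimal elements of
`ϑ⁻¹([m,∞]) ∩ P` have no common upper bound in `P`. -/
def MinimalityProperty (θ : ControlledMap Q Q') : Prop :=
  ∀ m ∈ Q'.P, ∀ p q : G, θ.Minimal m p → θ.Minimal m q → p ≠ q → ¬ Q.HasCUB p q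

end ControlledMap

/-- The quasi-lattice ordered group `(ℤ^κ, ℤ₊^κ)` (written multiplicatively). -/
def ZQL (κ : Type*) : QuasiLattice (Multiplicative (κ → ℤ)) where
  P := {x | ∀ i, 0 ≤ Multiplicative.toAdd x i}
  one_mem := fun i => le_refl 0
  mul_mem := fun {a b} ha hb i => add_nonneg (ha i) (hb i)
  antisymm' := fun g hg hg' => by
    have h : ∀ i, Multiplicative.toAdd g i = 0 := fun i => by
      have h1 := hg i
      have h2 := hg' i
      simp only [toAdd_inv, Pi.neg_apply] at h2
      omega
    have : Multiplicative.toAdd g = 0 := funext h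
    simpa using this
  lub_exists := fun p hp q hq _ => by
    refine ⟨Multiplicative.ofAdd
      (fun i => max (Multiplicative.toAdd p i) (Multiplicative.toAdd q i)), ?_, ?_, ?_, ?_⟩
    · intro i
      have := hp i
      simp only [toAdd_ofAdd]
      omega
    · intro i
      simp only [toAdd_mul, toAdd_inv, Pi.add_apply,
        Pi.neg_apply, toAdd_ofAdd]
      omega
    · intro i
      simp only [toAdd_mul, toAdd_inv, Pi.add_apply,
        Pi.neg_apply, toAdd_ofAdd]
      omega
    · intro s _ hps hqs i
      have h1 := hps i
      have h2 := hqs i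
      simp only [toAdd_mul, toAdd_inv, Pi.add_apply,
        Pi.neg_apply, toAdd_ofAdd] at h1 h2 ⊢
      omega

/-- (C4) If `ϑ : (G,P) → (G',P')` is a controlled map between
quasi-lattice ordered groups, `p, q ∈ P` have a common upper bound in `P`, and
`ϑ(p) ≤ ϑ(q)`, then `p ≤ q`. -/
theorem controlledMap_le_of_le {G G' : Type*} [Group G] [Group G']
    {Q : QuasiLattice G} {Q' : QuasiLattice G'} (θ : ControlledMap Q Q')
    {p q : G} (hp : p ∈ Q.P) (hq : q ∈ Q.P) (hcub : Q.HasCUB p q)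
    (hle : Q'.le (θ.toFun p) (θ.toFun q)) : Q.le p q := by
  obtain ⟨r₀, hr₀, hpr₀, hqr₀⟩ := hcub
  obtain ⟨r, hr, hpr, hqr, hlub⟩ := Q.lub_exists p hp q hq ⟨r₀, hr₀, hpr₀, hqr₀⟩
  obtain ⟨hθr, hθpr, hθqr, hθlub⟩ :=
    θ.map_lub p hp q hq r ⟨hr, hpr, hqr, hlub⟩
  have h1 : Q'.le (θ.toFun r) (θ.toFun q) :=
    hθlub _ (θ.mapsP q hq) hle (by simpa [QuasiLattice.le] using Q'.one_mem)
  have heq : (θ.toFun q)⁻¹ * θ.toFun r = 1 := by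
    refine Q'.antisymm' _ hθqr ?_
    simpa [mul_inv_rev, QuasiLattice.le] using h1
  set t := q⁻¹ * r with ht
  have htP : t ∈ Q.P := hqr
  have hθt : θ.toFun t = 1 := by
    simpa [ht, map_mul, map_inv] using heq
  have hpowP : ∀ n : ℕ, t ^ n ∈ Q.P := by
    intro n
    induction n with
    | zero => simpa using Q.one_mem
    | succ k ih => rw [pow_succ]; exact Q.mul_mem ih htP
  have hmem : ∀ n : ℕ, t ^ n ∈ {s | s ∈ Q.P ∧ θ.toFun s = 1} := by
    intro n
    exact ⟨hpowP n, by simp [map_pow, hθt]⟩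
  have hninj : ¬ Function.Injective (fun n : ℕ => t ^ n) := by
    intro hinj
    exact Set.infinite_of_injective_forall_mem hinj hmem (θ.finite_fibers 1)
  have key : ∀ a b : ℕ, a < b → t ^ a = t ^ b → t = 1 := by
    intro a b hab hpow
    have hk : t ^ (b - a) = 1 := by
      have h2 : t ^ a * t ^ (b - a) = t ^ a * 1 := by
        rw [mul_one, ← pow_add, Nat.add_sub_cancel' hab.le]
        exact hpow.symm
      exact mul_left_cancel h2
    have h3 : t * t ^ (b - a - 1) = 1 := by
      have : b - a - 1 + 1 = b - a := by omega
      rw [← pow_succ', this]; exact hk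
    have hinv : t⁻¹ ∈ Q.P := by
      rw [inv_eq_of_mul_eq_one_right h3]
      exact hpowP _
    exact Q.antisymm' t htP hinv
  have ht1 : t = 1 := by
    obtain ⟨m, n, hmn, hne⟩ := Function.not_injective_iff.mp hninj
    rcases hne.lt_or_gt with h | h
    · exact key m n h hmn
    · exact key n m h hmn.symm
  have hrq : r = q := by
    have := inv_mul_eq_one.mp ht1
    exact this.symm
  show p⁻¹ * q ∈ Q.P
  rw [← hrq]
  exact hpr
end

section
/- Let ϑ: (G,P) → (G',P') be a controlled map between quasi-lattice ordered groups. If p, q ∈ P have a common upper bound in P and ϑ(p) = ϑ(q), then p = q. -/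
/-!
Let `r = p ∨ q`. Then `ϑ(r) = ϑ(p) ∨ ϑ(q) = ϑ(p)`, so `p⁻¹ r ∈ P` lies in the kernel of `ϑ`.
All powers of a positive element of the kernel lie in the finite fibre over `1`, so it has finite
order; its inverse is then one of its powers, hence positive, and `P ∩ P⁻¹ = {1}` forces it to be
trivial. Thus `p = r`, and likewise `q = r`.
-/

namespace QuasiLattice

variable {G : Type*} [Group G] (Q : QuasiLattice G)

def cone : Submonoid G where
  carrier := Q.P
  one_mem' := Q.one_mem
  mul_mem' := Q.mul_mem

theorem le_refl (g : G) : Q.le g g := by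
  simpa [le] using Q.one_mem

theorem le_antisymm {g h : G} (hgh : Q.le g h) (hhg : Q.le h g) : g = h := by
  have hinv : (g⁻¹ * h)⁻¹ ∈ Q.P := by simpa [le] using hhg
  simpa [inv_mul_eq_one] using Q.antisymm' _ hgh hinv

theorem eq_one_of_isOfFinOrder {a : G} (ha : a ∈ Q.P) (hfin : IsOfFinOrder a) : a = 1 := by
  have hinv : a⁻¹ ∈ Submonoid.powers a :=
    hfin.mem_powers_iff_mem_zpowers.mpr (inv_mem (Subgroup.mem_zpowers a))
  exact Q.antisymm' a ha ((Submonoid.powers_le (P := Q.cone)).mpr ha hinv)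

theorem IsLub.eq_of_self {Q : QuasiLattice G} {g r : G} (h : Q.IsLub g g r) (hg : g ∈ Q.P) :
    r = g :=
  Q.le_antisymm (h.2.2.2 g hg (Q.le_refl g) (Q.le_refl g)) h.2.1

end QuasiLattice

namespace ControlledMap

variable {G G' : Type*} [Group G] [Group G'] {Q : QuasiLattice G} {Q' : QuasiLattice G'}
  (θ : ControlledMap Q Q')

theorem isOfFinOrder_of_map_eq_one {a : G} (ha : a ∈ Q.P) (h1 : θ.toFun a = 1) :
    IsOfFinOrder a := by
  refine finite_powers.mp ((θ.finite_fibers 1).subset ?_)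
  rintro _ ⟨n, rfl⟩
  exact ⟨Submonoid.pow_mem Q.cone ha n, by rw [map_pow, h1, one_pow]⟩

theorem eq_one_of_map_eq_one {a : G} (ha : a ∈ Q.P) (h1 : θ.toFun a = 1) : a = 1 :=
  Q.eq_one_of_isOfFinOrder ha (θ.isOfFinOrder_of_map_eq_one ha h1)

theorem eq_of_le_of_map_eq {g h : G} (hgh : Q.le g h) (heq : θ.toFun g = θ.toFun h) :
    g = h := by
  have h1 : θ.toFun (g⁻¹ * h) = 1 := by rw [map_mul, map_inv, heq, inv_mul_cancel]
  exact inv_mul_eq_one.mp (θ.eq_one_of_map_eq_one hgh h1)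

end ControlledMap

/-- (C5) If `ϑ : (G,P) → (G',P')` is a controlled map between
quasi-lattice ordered groups, `p, q ∈ P` have a common upper bound in `P`, and
`ϑ(p) = ϑ(q)`, then `p = q`. -/
theorem controlledMap_eq_of_eq {G G' : Type*} [Group G] [Group G']
    {Q : QuasiLattice G} {Q' : QuasiLattice G'} (θ : ControlledMap Q Q')
    {p q : G} (hp : p ∈ Q.P) (hq : q ∈ Q.P) (hcub : Q.HasCUB p q)
    (heq : θ.toFun p = θ.toFun q) : p = q := by
  obtain ⟨r, hr, hpr, hqr, hleast⟩ := Q.lub_exists p hp q hq hcub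
  have hlub : Q.IsLub p q r := ⟨hr, hpr, hqr, hleast⟩
  have hθlub := θ.map_lub p hp q hq r hlub
  rw [heq] at hθlub
  have hθr : θ.toFun r = θ.toFun q := hθlub.eq_of_self (θ.mapsP q hq)
  rw [θ.eq_of_le_of_map_eq hpr (heq.trans hθr.symm), θ.eq_of_le_of_map_eq hqr hθr.symm]
end

section
/- Let (G,P) and (H,S) be quasi-lattice ordered groups and α: H → Aut(G) an action such that α_s restricts to an automorphism of P for each s ∈ S. Then the pair (G ⋊_α H, P·S) is a quasi-lattice ordered group, where P·S = {ps : p ∈ P, s ∈ S} is a subsemigroup of the semidirect product. Moreover, for g₁,g₂ ∈ P and h₁,h₂ ∈ S, the element (g₁h₁) ∨ (g₂h₂) exists if and only if g₁ ∨ g₂ exists in P and h₁ ∨ h₂ exists in S, and in that case (g₁h₁) ∨ (g₂h₂) = (g₁ ∨ g₂)(h₁ ∨ h₂). -/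
/-!
For `x = g s` with `s ∈ S`, the `G`-component of `x⁻¹ y` is `α_{s⁻¹}(g⁻¹ y.left)`, and `α_{s⁻¹}`
preserves `P`. Hence above an element of `P·S` the order of `G ⋊_α H` is the product of the
orders of `G` and `H`, so common upper bounds and least upper bounds in `P·S` are computed
componentwise from those in `P` and in `S`.
-/

theorem SemidirectProduct.inv_mul_left {N K : Type*} [Group N] [Group K] {φ : K →* MulAut N}
    (x y : N ⋊[φ] K) : (x⁻¹ * y).left = φ x.right⁻¹ (x.left⁻¹ * y.left) := by
  simp only [SemidirectProduct.mul_left, SemidirectProduct.inv_left,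
    SemidirectProduct.inv_right, map_mul]

namespace QuasiLattice

section SemidirectProduct

variable {G H : Type*} [Group G] [Group H] (Q : QuasiLattice G) (QS : QuasiLattice H)
  (α : H →* MulAut G)

/-- The cone `P·S`; the pair `⟨g, h⟩` is the product `g h`
(`SemidirectProduct.mk_eq_inl_mul_inr`). -/
def semidirectCone : Set (G ⋊[α] H) := {x | x.left ∈ Q.P ∧ x.right ∈ QS.P}

variable {Q QS α}

theorem mem_semidirectCone {x : G ⋊[α] H} :
    x ∈ semidirectCone Q QS α ↔ x.left ∈ Q.P ∧ x.right ∈ QS.P :=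
  Iff.rfl

theorem map_inv_mem_iff (hα : ∀ s ∈ QS.P, ∀ g : G, g ∈ Q.P ↔ α s g ∈ Q.P)
    {s : H} (hs : s ∈ QS.P) {g : G} : α s⁻¹ g ∈ Q.P ↔ g ∈ Q.P := by
  rw [hα s hs, ← MulAut.mul_apply, ← map_mul, mul_inv_cancel, map_one, MulAut.one_apply]

theorem inv_mul_mem_semidirectCone_iff (hα : ∀ s ∈ QS.P, ∀ g : G, g ∈ Q.P ↔ α s g ∈ Q.P)
    {x y : G ⋊[α] H} (hx : x.right ∈ QS.P) :
    x⁻¹ * y ∈ semidirectCone Q QS α ↔ Q.le x.left y.left ∧ QS.le x.right y.right := by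
  rw [mem_semidirectCone, SemidirectProduct.inv_mul_left, map_inv_mem_iff hα hx,
    SemidirectProduct.mul_right, SemidirectProduct.inv_right]
  rfl

/-- The left side here, and the conclusion of `isLub_semidirectCone`, are `HasCUB` and `IsLub`
for the cone `P·S` unfolded, as they are needed to construct `semidirectProduct` itself. -/
theorem exists_upper_bound_semidirectCone_iff
    (hα : ∀ s ∈ QS.P, ∀ g : G, g ∈ Q.P ↔ α s g ∈ Q.P) {p q : G ⋊[α] H}
    (hp : p.right ∈ QS.P) (hq : q.right ∈ QS.P) :
    (∃ r ∈ semidirectCone Q QS α, p⁻¹ * r ∈ semidirectCone Q QS α ∧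
        q⁻¹ * r ∈ semidirectCone Q QS α) ↔
      Q.HasCUB p.left q.left ∧ QS.HasCUB p.right q.right := by
  simp only [inv_mul_mem_semidirectCone_iff hα hp, inv_mul_mem_semidirectCone_iff hα hq]
  constructor
  · rintro ⟨r, ⟨hrG, hrH⟩, ⟨hprG, hprH⟩, hqrG, hqrH⟩
    exact ⟨⟨r.left, hrG, hprG, hqrG⟩, r.right, hrH, hprH, hqrH⟩
  · rintro ⟨⟨g, hg, hpg, hqg⟩, h, hh, hph, hqh⟩
    exact ⟨⟨g, h⟩, ⟨hg, hh⟩, ⟨hpg, hph⟩, hqg, hqh⟩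

theorem isLub_semidirectCone (hα : ∀ s ∈ QS.P, ∀ g : G, g ∈ Q.P ↔ α s g ∈ Q.P)
    {p q : G ⋊[α] H} (hp : p.right ∈ QS.P) (hq : q.right ∈ QS.P) {g : G} {h : H}
    (hg : Q.IsLub p.left q.left g) (hh : QS.IsLub p.right q.right h) :
    (⟨g, h⟩ : G ⋊[α] H) ∈ semidirectCone Q QS α ∧
      p⁻¹ * ⟨g, h⟩ ∈ semidirectCone Q QS α ∧ q⁻¹ * ⟨g, h⟩ ∈ semidirectCone Q QS α ∧
      ∀ s ∈ semidirectCone Q QS α, p⁻¹ * s ∈ semidirectCone Q QS α →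
        q⁻¹ * s ∈ semidirectCone Q QS α →
          (⟨g, h⟩ : G ⋊[α] H)⁻¹ * s ∈ semidirectCone Q QS α := by
  obtain ⟨hgP, hpg, hqg, hg_least⟩ := hg
  obtain ⟨hhP, hph, hqh, hh_least⟩ := hh
  refine ⟨⟨hgP, hhP⟩, (inv_mul_mem_semidirectCone_iff hα hp).2 ⟨hpg, hph⟩,
    (inv_mul_mem_semidirectCone_iff hα hq).2 ⟨hqg, hqh⟩, fun s hs hps hqs => ?_⟩
  obtain ⟨hpsG, hpsH⟩ := (inv_mul_mem_semidirectCone_iff hα hp).1 hps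
  obtain ⟨hqsG, hqsH⟩ := (inv_mul_mem_semidirectCone_iff hα hq).1 hqs
  exact (inv_mul_mem_semidirectCone_iff hα hhP).2
    ⟨hg_least s.left hs.1 hpsG hqsG, hh_least s.right hs.2 hpsH hqsH⟩

variable (Q QS α) in
def semidirectProduct (hα : ∀ s ∈ QS.P, ∀ g : G, g ∈ Q.P ↔ α s g ∈ Q.P) :
    QuasiLattice (G ⋊[α] H) where
  P := semidirectCone Q QS α
  one_mem := ⟨Q.one_mem, QS.one_mem⟩
  mul_mem := fun {a _} ha hb =>
    ⟨Q.mul_mem ha.1 ((hα a.right ha.2 _).1 hb.1), QS.mul_mem ha.2 hb.2⟩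
  antisymm' := fun x hx hx_inv => by
    have hxH : x.right = 1 := QS.antisymm' _ hx.2 hx_inv.2
    have hx_invG : x.left⁻¹ ∈ Q.P := by simpa [hxH] using hx_inv.1
    exact SemidirectProduct.ext (Q.antisymm' _ hx.1 hx_invG) hxH
  lub_exists := fun p hp q hq hpq => by
    obtain ⟨⟨g, hg⟩, h, hh⟩ := (exists_upper_bound_semidirectCone_iff hα hp.2 hq.2).1 hpq
    obtain ⟨g, hg⟩ := Q.lub_exists _ hp.1 _ hq.1 ⟨g, hg⟩
    obtain ⟨h, hh⟩ := QS.lub_exists _ hp.2 _ hq.2 ⟨h, hh⟩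
    exact ⟨⟨g, h⟩, isLub_semidirectCone hα hp.2 hq.2 hg hh⟩

end SemidirectProduct

end QuasiLattice

/-- If `(G,P)` and `(H,S)` are quasi-lattice ordered groups and
`α : H → Aut(G)` restricts to automorphisms of `P` on `S`, then `(G ⋊_α H, P·S)` is a
quasi-lattice ordered group; moreover `(g₁h₁) ∨ (g₂h₂)` exists iff `g₁ ∨ g₂` and
`h₁ ∨ h₂` exist, in which case `(g₁h₁) ∨ (g₂h₂) = (g₁ ∨ g₂)(h₁ ∨ h₂)`. -/
theorem semidirectProduct_quasiLattice {G H : Type*} [Group G] [Group H]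
    (Q : QuasiLattice G) (QS : QuasiLattice H) (α : H →* MulAut G)
    (hα : ∀ s ∈ QS.P, ∀ g : G, g ∈ Q.P ↔ α s g ∈ Q.P) :
    ∃ QSD : QuasiLattice (G ⋊[α] H),
      QSD.P = {x : G ⋊[α] H | x.left ∈ Q.P ∧ x.right ∈ QS.P} ∧
      ∀ g₁ ∈ Q.P, ∀ g₂ ∈ Q.P, ∀ h₁ ∈ QS.P, ∀ h₂ ∈ QS.P,
        (QSD.HasCUB ⟨g₁, h₁⟩ ⟨g₂, h₂⟩ ↔ Q.HasCUB g₁ g₂ ∧ QS.HasCUB h₁ h₂) ∧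
        (∀ g h, Q.IsLub g₁ g₂ g → QS.IsLub h₁ h₂ h →
          QSD.IsLub ⟨g₁, h₁⟩ ⟨g₂, h₂⟩ ⟨g, h⟩) :=
  ⟨QuasiLattice.semidirectProduct Q QS α hα, rfl, fun _ _ _ _ _ hh₁ _ hh₂ =>
    ⟨QuasiLattice.exists_upper_bound_semidirectCone_iff hα hh₁ hh₂,
      fun _ _ hg hh => QuasiLattice.isLub_semidirectCone hα hh₁ hh₂ hg hh⟩⟩
end
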